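/- arXiv:2005.02243 — 4 statements merged into one kernel-verified Lean document; each statement's English description precedes it below -/
import Mathlib

section
/- Let M be a closed subspace of the vector-valued Hardy space H²(𝔻, ℂ^m) such that not every function in M vanishes at 0. Then the subspace W = M ⊖ (M ∩ zH²(𝔻, ℂ^m)) satisfies 1 ≤ dim W ≤ m. -/
noncomputable section

open scoped ENNReal ComplexConjugate
open ContinuousLinearMap

abbrev Cm (m : ℕ) := EuclideanSpace ℂ (Fin m)
abbrev H2 (m : ℕ) := lp (fun _ : ℕ => Cm m) 2

namespace Hardy

variable {m r : ℕ}

lemma two_toReal : (2 : ℝ≥0∞).toReal = 2 := by norm_num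

def shiftFun (f : ℕ → Cm m) : ℕ → Cm m := fun n => match n with
  | 0 => 0
  | k + 1 => f k

lemma shift_memℓp (f : H2 m) : Memℓp (shiftFun (f : ∀ _, Cm m)) 2 := by
  rw [memℓp_gen_iff (by norm_num)]
  have hs : Summable fun n : ℕ => ‖(f : ∀ _, Cm m) n‖ ^ (2 : ℝ≥0∞).toReal :=
    (lp.memℓp f).summable (by norm_num)
  have : Summable fun n : ℕ =>
      ‖shiftFun (f : ∀ _, Cm m) (n + 1)‖ ^ (2 : ℝ≥0∞).toReal := hs
  exact (summable_nat_add_iff 1).mp this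

/-- The forward shift `S` on the vector-valued Hardy space (Taylor-coefficient model). -/
def S (m : ℕ) : H2 m →L[ℂ] H2 m :=
  LinearMap.mkContinuous
    { toFun := fun f => ⟨shiftFun (f : ∀ _, Cm m), shift_memℓp f⟩
      map_add' := by
        intro f g
        apply Subtype.ext
        have key : shiftFun (↑(f + g) : ∀ _, Cm m)
            = shiftFun (f : ∀ _, Cm m) + shiftFun (g : ∀ _, Cm m) := by
          funext n
          have h : (shiftFun (f : ∀ _, Cm m) + shiftFun (g : ∀ _, Cm m)) n
              = shiftFun (f : ∀ _, Cm m) n + shiftFun (g : ∀ _, Cm m) n := rfl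
          rw [h, lp.coeFn_add]
          cases n with
          | zero => simp [shiftFun]
          | succ k => simp [shiftFun]
        exact key
      map_smul' := by
        intro c f
        apply Subtype.ext
        have key : shiftFun (↑(c • f) : ∀ _, Cm m)
            = c • shiftFun (f : ∀ _, Cm m) := by
          funext n
          have h : (c • shiftFun (f : ∀ _, Cm m)) n
              = c • shiftFun (f : ∀ _, Cm m) n := rfl
          rw [h, lp.coeFn_smul]
          cases n with
          | zero => simp [shiftFun]
          | succ k => simp [shiftFun]
        exact key }
    1
    (by
      intro f
      simp only [one_mul]
      apply le_of_eq
      have h2 : (0:ℝ) < (2 : ℝ≥0∞).toReal := by norm_num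
      rw [lp.norm_eq_tsum_rpow h2, lp.norm_eq_tsum_rpow h2]
      congr 1
      have hsum : Summable fun n : ℕ =>
          ‖shiftFun (f : ∀ _, Cm m) n‖ ^ (2 : ℝ≥0∞).toReal := by
        rw [← memℓp_gen_iff (by norm_num)]; exact shift_memℓp f
      have key : ∑' n : ℕ, ‖shiftFun (f : ∀ _, Cm m) n‖ ^ (2 : ℝ≥0∞).toReal
          = ∑' n : ℕ, ‖(f : ∀ _, Cm m) n‖ ^ (2 : ℝ≥0∞).toReal := by
        rw [hsum.tsum_eq_zero_add]
        simp [shiftFun]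
      exact key)

/-- The backward shift `S*` (the adjoint of the forward shift). -/
def Sadj (m : ℕ) : H2 m →L[ℂ] H2 m := ContinuousLinearMap.adjoint (S m)

/-- `T` is a multiplier (multiplication by an operator-valued analytic function),
characterized by intertwining the shifts. -/
def IsMultiplier (T : H2 r →L[ℂ] H2 m) : Prop := S m ∘L T = T ∘L S r

/-- `T` is (the multiplication operator of) an inner multiplier: an isometric multiplier. -/
def IsInnerMultiplier (T : H2 r →L[ℂ] H2 m) : Prop :=
  (∀ f, ‖T f‖ = ‖f‖) ∧ IsMultiplier T

/-- The model space `K_Θ = H² ⊖ Θ H²`. -/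
def modelSpace (T : H2 r →L[ℂ] H2 m) : Submodule ℂ (H2 m) := (LinearMap.range (T : H2 r →ₗ[ℂ] H2 m))ᗮ

/-- The constant function with value `v` (Taylor coefficients `(v,0,0,…)`). -/
def const (v : Cm m) : H2 m := lp.single 2 0 v

/-- The constant function `eᵢ`. -/
def e (m : ℕ) (i : Fin m) : H2 m := const (EuclideanSpace.single i 1)

lemma coord_norm_le (x : Cm m) (i : Fin m) : ‖x i‖ ≤ ‖x‖ := by
  rw [EuclideanSpace.norm_eq]
  have h1 : ‖x i‖ = Real.sqrt (‖x i‖ ^ 2) := by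
    rw [Real.sqrt_sq (norm_nonneg _)]
  rw [h1]
  apply Real.sqrt_le_sqrt
  exact Finset.single_le_sum (f := fun j => ‖x j‖ ^ 2)
    (fun j _ => by positivity) (Finset.mem_univ i)

lemma coord_memℓp (i : Fin m) (f : H2 m) :
    Memℓp (fun n => EuclideanSpace.single (0 : Fin 1) ((f : ∀ _, Cm m) n i)) 2 := by
  rw [memℓp_gen_iff (by norm_num)]
  have hs : Summable fun n : ℕ => ‖(f : ∀ _, Cm m) n‖ ^ (2 : ℝ≥0∞).toReal :=
    (lp.memℓp f).summable (by norm_num)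
  apply Summable.of_nonneg_of_le (fun n => by positivity) _ hs
  intro n
  have : ‖EuclideanSpace.single (0 : Fin 1) ((f : ∀ _, Cm m) n i)‖
      = ‖(f : ∀ _, Cm m) n i‖ := by
    simp [EuclideanSpace.norm_single]
  rw [this]
  have h := coord_norm_le ((f : ∀ _, Cm m) n) i
  exact Real.rpow_le_rpow (norm_nonneg _) h (by norm_num)

/-- The `i`-th coordinate (column) of a `ℂᵐ`-valued Hardy space function, as a scalar
Hardy space function. -/
def coord (i : Fin m) (f : H2 m) : H2 1 :=
  ⟨fun n => EuclideanSpace.single (0 : Fin 1) ((f : ∀ _, Cm m) n i), coord_memℓp i f⟩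

/-- A multiplier on `H²(𝔻, ℂᵐ)` is diagonal, `Ψ = diag(ψ₁, …, ψ_m)`, with scalar
multipliers `ψᵢ` represented by the operators `t i`. -/
def IsDiagonal (T : H2 m →L[ℂ] H2 m) (t : Fin m → (H2 1 →L[ℂ] H2 1)) : Prop :=
  ∀ (f : H2 m) (i : Fin m), coord i (T f) = t i (coord i f)

/-- The analytic function on the disc associated to a scalar Hardy space element. -/
def toFun (f : H2 1) (z : ℂ) : ℂ := ∑' n : ℕ, ((f : ∀ _, Cm 1) n 0) * z ^ n

/-- `F` is a finite Blaschke product on the unit disc. -/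
def IsFiniteBlaschke (F : ℂ → ℂ) : Prop :=
  ∃ (k : ℕ) (c : ℂ) (a : Fin k → ℂ), ‖c‖ = 1 ∧ (∀ i, ‖a i‖ < 1) ∧
    ∀ z ∈ Metric.ball (0 : ℂ) 1,
      F z = c * ∏ i, (z - a i) / (1 - (starRingEnd ℂ) (a i) * z)

/-- `W = M ⊖ (M ∩ zH²)`. -/
def Wspace (M : Submodule ℂ (H2 m)) : Submodule ℂ (H2 m) :=
  M ⊓ (M ⊓ LinearMap.range (S m : H2 m →ₗ[ℂ] H2 m))ᗮ

end Hardy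

/-!
Write `K = zH²`, the kernel of evaluation at `0`. A function of `W = M ⊓ (M ⊓ K)ᗮ` vanishing at
`0` lies in `M ⊓ K` and is orthogonal to it, hence is zero; so evaluation at `0` embeds `W` into
`ℂᵐ`. Conversely, `M ⊓ K` is closed, so `M = (M ⊓ K) ⊔ W`, and `W = 0` would force every function
of `M` to vanish at `0`.
-/

namespace Submodule

variable {𝕜 E : Type*} [RCLike 𝕜] [NormedAddCommGroup E] [InnerProductSpace 𝕜 E]

theorem disjoint_inf_orthogonal_inf (M K : Submodule 𝕜 E) : Disjoint (M ⊓ (M ⊓ K)ᗮ) K := by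
  rw [disjoint_iff_inf_le]
  rintro x ⟨⟨hxM, hx⟩, hxK⟩
  exact inner_self_eq_zero.mp (hx x ⟨hxM, hxK⟩)

theorem inf_orthogonal_inf_ne_bot {M K : Submodule 𝕜 E} [(M ⊓ K).HasOrthogonalProjection]
    (h : ¬M ≤ K) : M ⊓ (M ⊓ K)ᗮ ≠ ⊥ := by
  intro hW
  have hsup := sup_orthogonal_inf_of_hasOrthogonalProjection (inf_le_left : M ⊓ K ≤ M)
  rw [inf_comm (M ⊓ K)ᗮ, hW, sup_bot_eq] at hsup
  exact h (hsup ▸ inf_le_right)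

end Submodule

namespace Hardy

variable {m : ℕ}

theorem range_S_eq_ker_evalCLM_zero :
    LinearMap.range (S m : H2 m →ₗ[ℂ] H2 m) = (lp.evalCLM ℂ (fun _ => Cm m) 2 0).ker := by
  ext f
  constructor
  · rintro ⟨g, rfl⟩
    rfl
  · intro hf
    have hmem : Memℓp (fun n => (f : ∀ _, Cm m) (n + 1)) 2 := by
      rw [memℓp_gen_iff (by norm_num)]
      exact (summable_nat_add_iff 1).mpr ((lp.memℓp f).summable (by norm_num))
    refine ⟨⟨_, hmem⟩, Subtype.ext (funext fun n => ?_)⟩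
    cases n with
    | zero => exact hf.symm
    | succ k => rfl

end Hardy

open Hardy in
/-- If `M` is a closed subspace of `H²(𝔻, ℂᵐ)` containing a function not vanishing at `0`,
then `W = M ⊖ (M ∩ zH²)` satisfies `1 ≤ dim W ≤ m`. -/
theorem stmt_1 (m : ℕ) (M : Submodule ℂ (H2 m)) (hclosed : IsClosed (M : Set (H2 m)))
    (hnv : ∃ F ∈ M, (F : ∀ _ : ℕ, Cm m) 0 ≠ 0) :
    1 ≤ Module.rank ℂ (Wspace M) ∧ Module.rank ℂ (Wspace M) ≤ (m : Cardinal) := by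
  rw [Wspace, range_S_eq_ker_evalCLM_zero]
  set ev := lp.evalCLM ℂ (fun _ => Cm m) 2 0
  have : CompleteSpace (M ⊓ ev.ker : Submodule ℂ (H2 m)) :=
    (hclosed.inter ev.isClosed_ker).completeSpace_coe
  obtain ⟨F, hFM, hF0⟩ := hnv
  have hMK : ¬M ≤ ev.ker := fun h => hF0 (h hFM)
  constructor
  · have := Submodule.nontrivial_iff_ne_bot.mpr (Submodule.inf_orthogonal_inf_ne_bot hMK)
    exact Cardinal.one_le_iff_pos.mpr rank_pos
  · calc _ ≤ Module.rank ℂ (Cm m) :=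
          (ev.toLinearMap.domRestrict _).rank_le_of_injective <|
            LinearMap.injective_domRestrict_iff.mpr (Submodule.disjoint_inf_orthogonal_inf _ _)
      _ = m := by rw [← Module.finrank_eq_rank, finrank_euclideanSpace_fin]
end
end

section
/- Let Θ ∈ H^∞(𝔻, L(ℂ^{r'}, ℂ^r)) be an inner multiplier and let K_Θ = H²(𝔻, ℂ^r) ⊖ Θ H²(𝔻, ℂ^{r'}) be the associated model space. If {e_1, …, e_{r'}} is an orthonormal basis of ℂ^{r'} and Θ̃_i = Θ e_i ∈ H²(𝔻, ℂ^r), then S K_Θ ⊆ K_Θ + span{Θ̃_1, …, Θ̃_{r'}}, where S is the forward shift on H²(𝔻, ℂ^r). In particular K_Θ is almost invariant for S with defect at most r'. -/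
noncomputable section

open scoped ENNReal ComplexConjugate
open ContinuousLinearMap

/-! Since `Θ` is an isometry intertwining the shifts, for `f ∈ K_Θ` the splitting
`S f = (S f - Θ Θ* S f) + Θ Θ* S f` has its first summand in `K_Θ = ker Θ*`, while
`S* Θ* S f = Θ* S* S f = Θ* f = 0` makes `Θ* S f` a constant `∑ cᵢ eᵢ`, so that the second
summand lies in `span {Θ eᵢ}`. -/

section IsometryIntertwining

variable {𝕜 E F : Type*} [RCLike 𝕜]
  [NormedAddCommGroup E] [InnerProductSpace 𝕜 E] [CompleteSpace E]
  [NormedAddCommGroup F] [InnerProductSpace 𝕜 F] [CompleteSpace F]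

theorem ContinuousLinearMap.sub_apply_adjoint_mem_orthogonal_range {T : E →L[𝕜] F}
    (hT : adjoint T ∘L T = 1) (y : F) : y - T (adjoint T y) ∈ T.rangeᗮ := by
  rw [orthogonal_range, LinearMap.mem_ker, coe_coe, map_sub, ← comp_apply (adjoint T) T, hT,
    one_apply_eq_self, sub_self]

theorem ContinuousLinearMap.adjoint_apply_mem_ker_adjoint_of_comp_eq {T : E →L[𝕜] F}
    {A : F →L[𝕜] F} {B : E →L[𝕜] E} (hAB : A ∘L T = T ∘L B) (hA : adjoint A ∘L A = 1)
    {f : F} (hf : adjoint T f = 0) : adjoint T (A f) ∈ (adjoint B).ker := by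
  have hBA : adjoint B ∘L adjoint T = adjoint T ∘L adjoint A := by
    rw [← adjoint_comp, ← hAB, adjoint_comp]
  rw [LinearMap.mem_ker, coe_coe, ← comp_apply, hBA, comp_apply, ← comp_apply (adjoint A), hA,
    one_apply_eq_self, hf]

theorem ContinuousLinearMap.apply_mem_orthogonal_range_sup_map_ker_adjoint {T : E →L[𝕜] F}
    (hT : adjoint T ∘L T = 1) {A : F →L[𝕜] F} {B : E →L[𝕜] E} (hAB : A ∘L T = T ∘L B)
    (hA : adjoint A ∘L A = 1) {f : F} (hf : f ∈ T.rangeᗮ) :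
    A f ∈ T.rangeᗮ ⊔ (adjoint B).ker.map (T : E →ₗ[𝕜] F) := by
  rw [orthogonal_range] at hf
  rw [← sub_add_cancel (A f) (T (adjoint T (A f)))]
  exact Submodule.add_mem_sup (sub_apply_adjoint_mem_orthogonal_range hT _)
    ⟨_, adjoint_apply_mem_ker_adjoint_of_comp_eq hAB hA hf, rfl⟩

end IsometryIntertwining

namespace Hardy

variable {m : ℕ}

theorem coe_S (f : H2 m) : ⇑(S m f) = shiftFun ⇑f := rfl

theorem S_single (n : ℕ) (v : Cm m) : S m (lp.single 2 n v) = lp.single 2 (n + 1) v := by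
  ext k : 2
  rw [coe_S]
  cases k with
  | zero => rw [lp.single_apply, Pi.single_apply, if_neg (by omega)]; rfl
  | succ j => simp only [shiftFun, lp.single_apply, Pi.single_apply, add_left_inj]

theorem inner_S_S (g h : H2 m) : inner ℂ (S m g) (S m h) = inner ℂ g h := by
  have hsum : Summable fun n => inner ℂ ((S m g : ∀ _, Cm m) n) ((S m h : ∀ _, Cm m) n) :=
    lp.summable_inner (S m g) (S m h)
  rw [lp.inner_eq_tsum, lp.inner_eq_tsum, hsum.tsum_eq_zero_add]
  simp only [coe_S, shiftFun, inner_zero_left, zero_add]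

theorem adjoint_S_comp_S : adjoint (S m) ∘L S m = 1 :=
  (S m).inner_map_map_iff_adjoint_comp_self.mp inner_S_S

theorem const_mem_span_e (v : Cm m) : const v ∈ Submodule.span ℂ (Set.range (e m)) := by
  have hv := (EuclideanSpace.basisFun (Fin m) ℂ).toBasis.mem_span v
  rw [OrthonormalBasis.coe_toBasis] at hv
  have hrange : Set.range (e m)
      = lp.lsingle (𝕜 := ℂ) 2 0 '' Set.range (EuclideanSpace.basisFun (Fin m) ℂ) := by
    rw [← Set.range_comp]
    congr
    funext i
    simp [e, const, EuclideanSpace.basisFun_apply]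
  rw [hrange]
  exact Submodule.apply_mem_span_image_of_mem_span _ hv

theorem coeff_succ_eq_zero_of_Sadj_eq_zero {h : H2 m} (hh : Sadj m h = 0) (n : ℕ) :
    (h : ∀ _, Cm m) (n + 1) = 0 := by
  have horth : ∀ v : Cm m, inner ℂ v ((h : ∀ _, Cm m) (n + 1)) = 0 := fun v => by
    rw [← lp.inner_single_left (G := fun _ : ℕ => Cm m) (n + 1) v h, ← S_single,
      ← adjoint_inner_right, ← Sadj, hh, inner_zero_right]
  exact inner_self_eq_zero.mp (horth _)

theorem eq_const_of_Sadj_eq_zero {h : H2 m} (hh : Sadj m h = 0) :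
    h = const ((h : ∀ _, Cm m) 0) := by
  ext n : 2
  cases n with
  | zero => exact (lp.single_apply_self (E := fun _ : ℕ => Cm m) 2 0 _).symm
  | succ n =>
    rw [coeff_succ_eq_zero_of_Sadj_eq_zero hh, const, lp.single_apply, Pi.single_apply,
      if_neg (by omega)]

theorem ker_Sadj_le_span_e : (Sadj m).ker ≤ Submodule.span ℂ (Set.range (e m)) :=
  fun _ hh => eq_const_of_Sadj_eq_zero hh ▸ const_mem_span_e _

end Hardy

open Hardy in
/-- For an inner multiplier `Θ : H²(ℂ^{r'}) → H²(ℂ^r)` with model space `K_Θ` and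
`Θ̃ᵢ = Θ eᵢ`, one has `S K_Θ ⊆ K_Θ + span{Θ̃ᵢ}`; in particular `K_Θ` is almost invariant
for the shift `S` with defect at most `r'`. -/
theorem stmt_3 (r r' : ℕ) (T : H2 r' →L[ℂ] H2 r) (hT : IsInnerMultiplier T) :
    (∀ f ∈ modelSpace T,
      S r f ∈ modelSpace T ⊔ Submodule.span ℂ (Set.range fun i : Fin r' => T (e r' i))) ∧
    ∃ F : Submodule ℂ (H2 r), Module.rank ℂ F ≤ (r' : Cardinal) ∧
      ∀ f ∈ modelSpace T, S r f ∈ modelSpace T ⊔ F := by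
  obtain ⟨hiso, hmul⟩ := hT
  have hdefect : ∀ f ∈ modelSpace T,
      S r f ∈ modelSpace T ⊔ Submodule.span ℂ (Set.range fun i : Fin r' => T (e r' i)) := by
    intro f hf
    have hspan : (Sadj r').ker.map (T : H2 r' →ₗ[ℂ] H2 r)
        ≤ Submodule.span ℂ (Set.range fun i : Fin r' => T (e r' i)) := by
      rw [Set.range_comp' T (e r'), ← coe_coe, ← Submodule.map_span]
      exact Submodule.map_mono ker_Sadj_le_span_e
    exact sup_le_sup_left hspan _ <| apply_mem_orthogonal_range_sup_map_ker_adjoint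
      (T.norm_map_iff_adjoint_comp_self.mp hiso) hmul adjoint_S_comp_S hf
  refine ⟨hdefect, _, ?_, hdefect⟩
  calc Module.rank ℂ (Submodule.span ℂ (Set.range fun i : Fin r' => T (e r' i)))
      ≤ Cardinal.mk (Set.range fun i : Fin r' => T (e r' i)) := rank_span_le _
    _ ≤ Cardinal.mk (Fin r') := Cardinal.mk_range_le
    _ = r' := Cardinal.mk_fin r'
end
end

section
/- Let Ψ = diag(ψ_1, …, ψ_m) be a diagonal inner multiplier on H²(𝔻, ℂ^m) with ψ_i(0) ≠ 0 for every i, and let Θ ∈ H^∞(𝔻, L(ℂ^r, ℂ^m)) be any inner multiplier with r ≤ m. Then the subspace Ψ K_Θ is nearly invariant for the backward shift S*: whenever F ∈ Ψ K_Θ satisfies F(0) = 0, one has S*F ∈ Ψ K_Θ. -/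
/-!
Because `Ψ` is diagonal, the constant term of `Ψ K` is `diag(ψᵢ(0)) K(0)`, so `(Ψ K)(0) = 0`
forces `K(0) = 0`, i.e. `K = S G` with `G = S* K`, and `G ∈ K_Θ` since `K_Θ` is `S*`-invariant.
As `Ψ` commutes with `S` and `S* S = 1`, `S* (Ψ K) = S* S (Ψ G) = Ψ G ∈ Ψ K_Θ`.
-/

noncomputable section

open scoped ENNReal ComplexConjugate
open ContinuousLinearMap

namespace Hardy

variable {m r : ℕ}

open scoped InnerProductSpace

lemma S_apply_zero (f : H2 m) : S m f 0 = 0 := rfl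

lemma S_apply_succ (f : H2 m) (n : ℕ) : S m f (n + 1) = f n := rfl

lemma norm_S (f : H2 m) : ‖S m f‖ = ‖f‖ := by
  have hsum : Summable fun n => ‖shiftFun (f : ∀ _, Cm m) n‖ ^ (2 : ℝ≥0∞).toReal :=
    (shift_memℓp f).summable (by norm_num)
  rw [lp.norm_eq_tsum_rpow (by norm_num), lp.norm_eq_tsum_rpow (by norm_num)]
  congr 1
  change ∑' n, ‖shiftFun (f : ∀ _, Cm m) n‖ ^ _ = _
  rw [hsum.tsum_eq_zero_add]
  simp [shiftFun]

lemma Sadj_S (f : H2 m) : Sadj m (S m f) = f :=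
  DFunLike.congr_fun ((S m).norm_map_iff_adjoint_comp_self.mp norm_S) f

lemma IsMultiplier.map_S {T : H2 r →L[ℂ] H2 m} (hT : IsMultiplier T) (f : H2 r) :
    T (S r f) = S m (T f) :=
  (DFunLike.congr_fun hT f).symm

lemma modelSpace_Sadj_mem {Θ : H2 r →L[ℂ] H2 m} (hΘ : IsMultiplier Θ) {K : H2 m}
    (hK : K ∈ modelSpace Θ) : Sadj m K ∈ modelSpace Θ := by
  rw [modelSpace, Submodule.mem_orthogonal] at hK ⊢
  rintro _ ⟨f, rfl⟩
  change ⟪Θ f, adjoint (S m) K⟫_ℂ = 0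
  rw [adjoint_inner_right, ← hΘ.map_S]
  exact hK _ ⟨S r f, rfl⟩

lemma lshift_memℓp (f : H2 m) : Memℓp (fun n => f (n + 1)) 2 := by
  rw [memℓp_gen_iff (by norm_num)]
  exact (summable_nat_add_iff 1).mpr ((lp.memℓp f).summable (by norm_num))

def lshift (f : H2 m) : H2 m := ⟨fun n => f (n + 1), lshift_memℓp f⟩

lemma const_add_S_lshift (f : H2 m) : const (f 0) + S m (lshift f) = f := by
  refine Subtype.ext (funext fun n => ?_)
  rcases n with _ | n
  · rw [lp.coeFn_add, Pi.add_apply, S_apply_zero, add_zero]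
    exact lp.single_apply_self 2 0 _
  · rw [lp.coeFn_add, Pi.add_apply, S_apply_succ, const, lp.single_apply_ne 2 0 _ n.succ_ne_zero,
      zero_add]
    rfl

lemma S_lshift_of_apply_zero {f : H2 m} (hf : f 0 = 0) : S m (lshift f) = f := by
  simpa [hf, const] using const_add_S_lshift f

lemma IsMultiplier.apply_zero {T : H2 r →L[ℂ] H2 m} (hT : IsMultiplier T) (f : H2 r) :
    T f 0 = T (const (f 0)) 0 := by
  conv_lhs => rw [← const_add_S_lshift f, map_add, hT.map_S]
  simp [S_apply_zero]

lemma const_eq_smul_e (v : Cm 1) : const v = v 0 • e 1 0 := by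
  rw [e, const, const, ← lp.single_smul]
  congr
  ext j
  fin_cases j
  simp

lemma IsMultiplier.apply_zero_eq_smul {t : H2 1 →L[ℂ] H2 1} (ht : IsMultiplier t)
    (g : H2 1) : t g 0 = g 0 0 • t (e 1 0) 0 := by
  rw [ht.apply_zero, const_eq_smul_e, map_smul]
  rfl

lemma coord_apply (i : Fin m) (f : H2 m) (n : ℕ) :
    coord i f n = EuclideanSpace.single 0 (f n i) := rfl

lemma IsDiagonal.apply_zero_eq_zero {T : H2 m →L[ℂ] H2 m} {t : Fin m → (H2 1 →L[ℂ] H2 1)}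
    (hT : IsDiagonal T t) (ht : ∀ i, IsMultiplier (t i)) (ht0 : ∀ i, t i (e 1 0) 0 ≠ 0)
    {f : H2 m} (hf : T f 0 = 0) : f 0 = 0 := by
  ext i
  have h : EuclideanSpace.single 0 (T f 0 i) = f 0 i • t i (e 1 0) 0 := by
    rw [← coord_apply, hT, (ht i).apply_zero_eq_smul, coord_apply]
    simp
  have h0 : f 0 i • t i (e 1 0) 0 = 0 := by
    rw [← h, hf]
    simp
  exact (smul_eq_zero.mp h0).resolve_right (ht0 i)

end Hardy
open Hardy in
theorem stmt_6_general (m r : ℕ)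
    (Ψ : H2 m →L[ℂ] H2 m) (ψ : Fin m → (H2 1 →L[ℂ] H2 1))
    (hΨ : IsInnerMultiplier Ψ) (hdiag : IsDiagonal Ψ ψ)
    (hψ : ∀ i, IsInnerMultiplier (ψ i))
    (hψ0 : ∀ i, ((ψ i (e 1 0) : H2 1) : ∀ _ : ℕ, Cm 1) 0 ≠ 0)
    (Θ : H2 r →L[ℂ] H2 m) (hΘ : IsInnerMultiplier Θ) :
    ∀ F ∈ (modelSpace Θ).map (Ψ : H2 m →ₗ[ℂ] H2 m), (F : ∀ _ : ℕ, Cm m) 0 = 0 →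
      Sadj m F ∈ (modelSpace Θ).map (Ψ : H2 m →ₗ[ℂ] H2 m) := by
  rintro _ ⟨K, hK, rfl⟩ hF0
  obtain ⟨G, rfl⟩ : ∃ G, S m G = K :=
    ⟨lshift K, S_lshift_of_apply_zero (hdiag.apply_zero_eq_zero (fun i => (hψ i).2) hψ0 hF0)⟩
  refine ⟨G, ?_, ?_⟩
  · have hG := modelSpace_Sadj_mem hΘ.2 hK
    rwa [Sadj_S] at hG
  · change Ψ G = Sadj m (Ψ (S m G))
    rw [hΨ.2.map_S, Sadj_S]

open Hardy in
/-- If `Ψ = diag(ψ₁, …, ψ_m)` is a diagonal inner multiplier with `ψᵢ(0) ≠ 0` for all `i`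
and `Θ : H²(ℂ^r) → H²(ℂᵐ)` is any inner multiplier with `r ≤ m`, then `Ψ K_Θ` is nearly
invariant for the backward shift `S*`. -/
theorem stmt_6 (m r : ℕ) (hr : r ≤ m)
    (Ψ : H2 m →L[ℂ] H2 m) (ψ : Fin m → (H2 1 →L[ℂ] H2 1))
    (hΨ : IsInnerMultiplier Ψ) (hdiag : IsDiagonal Ψ ψ)
    (hψ : ∀ i, IsInnerMultiplier (ψ i))
    (hψ0 : ∀ i, ((ψ i (e 1 0) : H2 1) : ∀ _ : ℕ, Cm 1) 0 ≠ 0)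
    (Θ : H2 r →L[ℂ] H2 m) (hΘ : IsInnerMultiplier Θ) :
    ∀ F ∈ (modelSpace Θ).map (Ψ : H2 m →ₗ[ℂ] H2 m), (F : ∀ _ : ℕ, Cm m) 0 = 0 →
      Sadj m F ∈ (modelSpace Θ).map (Ψ : H2 m →ₗ[ℂ] H2 m) :=
  stmt_6_general m r Ψ ψ hΨ hdiag hψ hψ0 Θ hΘ
end
end

section
/- Let M ⊆ H²(𝔻, ℂ^m) be a closed subspace such that every F ∈ M with F(0) = 0 can be uniquely written F = F_0 K_0 + Σ_{j=1}^p z k_j E_j with ‖F‖² = ‖K_0‖² + Σ_j ‖k_j‖², where F_0 has columns forming an orthonormal basis {W_1,…,W_r} of M ⊖ (M ∩ zH²) consisting of bounded analytic functions, and {E_1,…,E_p} ⊆ H^∞(𝔻, ℂ^m) is an orthonormal basis of the defect space F. Then G ∈ M^⊥ if and only if T*_{F_0} G ⊕ T*_{E_1} S* G ⊕ ⋯ ⊕ T*_{E_p} S* G ∈ K^⊥, where K ⊆ H²(𝔻, ℂ^{r+p}) is the closed S*-invariant subspace of coefficient tuples (K_0, k_1, …, k_p) arising from elements of M, and K^⊥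 is a closed shift-invariant subspace of H²(𝔻, ℂ^{r+p}). -/
noncomputable section

open scoped ENNReal ComplexConjugate
open ContinuousLinearMap

namespace Submodule

variable {𝕜 E X : Type*} [RCLike 𝕜] [NormedAddCommGroup E] [InnerProductSpace 𝕜 E]

theorem mem_orthogonal_iff_forall_inner_eq_zero_of_forall_mem_iff {M : Submodule 𝕜 E}
    {K : Set X} {Φ : X → E} (hM : ∀ x, x ∈ M ↔ ∃ q ∈ K, x = Φ q) (G : E) :
    G ∈ Mᗮ ↔ ∀ q ∈ K, inner 𝕜 G (Φ q) = 0 := by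
  rw [mem_orthogonal']
  constructor
  · intro h q hq
    exact h _ ((hM _).2 ⟨q, hq, rfl⟩)
  · intro h x hx
    obtain ⟨q, hq, rfl⟩ := (hM x).1 hx
    exact h q hq

end Submodule

open Hardy in
theorem stmt_18_general (m r p : ℕ) (M : Submodule ℂ (H2 m))
    (TF0 : H2 r →L[ℂ] H2 m)
    (TE : Fin p → (H2 1 →L[ℂ] H2 m))
    (K : Submodule ℂ (H2 r × (Fin p → H2 1)))
    (hrep : ∀ F : H2 m, F ∈ M ↔ ∃ q ∈ K, F = TF0 q.1 + ∑ j, S m (TE j (q.2 j))) :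
    ∀ G : H2 m, G ∈ Mᗮ ↔ ∀ q ∈ K,
      (inner ℂ (ContinuousLinearMap.adjoint TF0 G) q.1 : ℂ) +
        ∑ j, (inner ℂ (ContinuousLinearMap.adjoint (TE j) (Sadj m G)) (q.2 j) : ℂ) = 0 := by
  intro G
  rw [Submodule.mem_orthogonal_iff_forall_inner_eq_zero_of_forall_mem_iff hrep]
  simp only [SetLike.mem_coe, adjoint_inner_left, Sadj, inner_add_right, inner_sum]

open Hardy in
/-- With `M = {F₀K₀ + Σⱼ z kⱼ Eⱼ : (K₀, k) ∈ K}` (unique norm-additive representations,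
`K` closed and backward-shift invariant, columns of `F₀` an orthonormal basis of
`M ⊖ (M ∩ zH²)` and `{Eⱼ}` an orthonormal basis of the defect space), one has
`G ∈ Mᗮ` iff `T*_{F₀}G ⊕ T*_{E₁}S*G ⊕ ⋯ ⊕ T*_{E_p}S*G ∈ Kᗮ`. -/
theorem stmt_18 (m r p : ℕ) (M : Submodule ℂ (H2 m)) (hclosed : IsClosed (M : Set (H2 m)))
    (TF0 : H2 r →L[ℂ] H2 m) (hF0mul : IsMultiplier TF0)
    (hWmem : ∀ i : Fin r, TF0 (e r i) ∈ Wspace M)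
    (hWON : Orthonormal ℂ (fun i : Fin r => TF0 (e r i)))
    (hWspan : Submodule.span ℂ (Set.range fun i : Fin r => TF0 (e r i)) = Wspace M)
    (TE : Fin p → (H2 1 →L[ℂ] H2 m)) (hEmul : ∀ j, IsMultiplier (TE j))
    (hEON : Orthonormal ℂ (fun j : Fin p => TE j (e 1 0)))
    (K : Submodule ℂ (H2 r × (Fin p → H2 1)))
    (hK : IsClosed (K : Set (H2 r × (Fin p → H2 1))))
    (hKinv : ∀ q ∈ K, (Sadj r q.1, fun j => Sadj 1 (q.2 j)) ∈ K)
    (hrep : ∀ F : H2 m, F ∈ M ↔ ∃ q ∈ K, F = TF0 q.1 + ∑ j, S m (TE j (q.2 j)))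
    (hnormid : ∀ q ∈ K,
      ‖TF0 q.1 + ∑ j, S m (TE j (q.2 j))‖ ^ 2 = ‖q.1‖ ^ 2 + ∑ j, ‖q.2 j‖ ^ 2)
    (huniq : ∀ q ∈ K, ∀ q' ∈ K,
      TF0 q.1 + ∑ j, S m (TE j (q.2 j)) = TF0 q'.1 + ∑ j, S m (TE j (q'.2 j)) → q = q') :
    ∀ G : H2 m, G ∈ Mᗮ ↔ ∀ q ∈ K,
      (inner ℂ (ContinuousLinearMap.adjoint TF0 G) q.1 : ℂ) +
        ∑ j, (inner ℂ (ContinuousLinearMap.adjoint (TE j) (Sadj m G)) (q.2 j) : ℂ) = 0 :=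
  stmt_18_general m r p M TF0 TE K hrep
end
end
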